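/- If u:Ω→ℝ is Lipschitz continuous with Lipschitz constant λ, then E_θ(u) ≤ λ^θ |Ω| ∫_{ℝⁿ} |z₁|^{θ₁}|z₂|^{θ₂}|z|^{−θ} ρ(z) dz < ∞. In particular E_θ(u) is finite, and E_p(u)=0 for every p<θ. -/

import Mathlib

open MeasureTheory Filter Set
open scoped ENNReal Topology NNReal

noncomputable section

abbrev Euc (n : ℕ) : Type := EuclideanSpace ℝ (Fin n)

/-- Euclidean norm of a point of `ℝ^{n₁} × ℝ^{n₂}`. -/
def prodNorm {n₁ n₂ : ℕ} (z : Euc n₁ × Euc n₂) : ℝ :=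
  Real.sqrt (‖z.1‖ ^ 2 + ‖z.2‖ ^ 2)

/-- A radial nonnegative kernel of mass one supported in the unit ball. -/
structure IsKernel {n₁ n₂ : ℕ} (ρ : Euc n₁ × Euc n₂ → ℝ) : Prop where
  integrable : Integrable ρ volume
  nonneg : ∀ z, 0 ≤ ρ z
  total : (∫ z, ρ z) = 1
  radial : ∀ z w, prodNorm z = prodNorm w → ρ z = ρ w
  support : ∀ z, 1 ≤ prodNorm z → ρ z = 0

/-- A nonempty bounded open connected set. -/
structure GoodDomain {m : ℕ} (Ω : Set (Euc m)) : Prop where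
  nonempty : Ω.Nonempty
  isOpen : IsOpen Ω
  connected : IsConnected Ω
  bounded : Bornology.IsBounded Ω

/-- `Ω^ε := ⋂_{|z|<ε} (Ω - z)`. -/
def tube {m : ℕ} (Ω : Set (Euc m)) (ε : ℝ) : Set (Euc m) :=
  {x | ∀ z : Euc m, ‖z‖ < ε → x + z ∈ Ω}

/-- The localized energy `E_{ε,p}^{θ₁,θ₂}(u)`. -/
def Eeps {n₁ n₂ : ℕ} (ρ : Euc n₁ × Euc n₂ → ℝ) (Ω₁ : Set (Euc n₁)) (Ω₂ : Set (Euc n₂))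
    (θ₁ θ₂ p ε : ℝ) (u : Euc n₁ × Euc n₂ → ℝ) : ℝ≥0∞ :=
  ∫⁻ z : Euc n₁ × Euc n₂,
    ENNReal.ofReal ((ε ^ (n₁ + n₂))⁻¹ * ρ (ε⁻¹ • z)) *
      (∫⁻ x in (tube Ω₁ ε) ×ˢ (tube Ω₂ ε),
        ENNReal.ofReal
          (|u (x.1 + z.1, x.2) - u x| ^ θ₁ * |u (x.1, x.2 + z.2) - u x| ^ θ₂
            / prodNorm z ^ p))

/-- The energy `E_p^{θ₁,θ₂}(u) = liminf_{ε→0⁺} E_{ε,p}(u)`. -/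
def Energy {n₁ n₂ : ℕ} (ρ : Euc n₁ × Euc n₂ → ℝ) (Ω₁ : Set (Euc n₁)) (Ω₂ : Set (Euc n₂))
    (θ₁ θ₂ p : ℝ) (u : Euc n₁ × Euc n₂ → ℝ) : ℝ≥0∞ :=
  Filter.liminf (fun ε => Eeps ρ Ω₁ Ω₂ θ₁ θ₂ p ε u) (𝓝[>] (0 : ℝ))

/-- `u ∈ S(Ω)` : `u` depends a.e. only on `x₁` or only on `x₂`. -/
def memS {n₁ n₂ : ℕ} (Ω₁ : Set (Euc n₁)) (Ω₂ : Set (Euc n₂))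
    (u : Euc n₁ × Euc n₂ → ℝ) : Prop :=
  (∃ u₁ : Euc n₁ → ℝ, Measurable u₁ ∧
      ∀ᵐ x ∂(volume.restrict (Ω₁ ×ˢ Ω₂)), u x = u₁ x.1) ∨
  (∃ u₂ : Euc n₂ → ℝ, Measurable u₂ ∧
      ∀ᵐ x ∂(volume.restrict (Ω₁ ×ˢ Ω₂)), u x = u₂ x.2)

/-- The critical exponent `P(θ₁,θ₂)`. -/
def Pexp (θ₁ θ₂ : ℝ) : ℝ :=
  if θ₁ + θ₂ ≤ 1 then 2
  else if min θ₁ θ₂ ≤ 1 then 1 + (θ₁ + θ₂)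
  else min θ₁ θ₂ + (θ₁ + θ₂)

/-- The cross second derivative `∂_{x₁,i} ∂_{x₂,j} φ (x)`. -/
def crossD {n₁ n₂ : ℕ} (φ : Euc n₁ × Euc n₂ → ℝ) (i : Fin n₁) (j : Fin n₂)
    (x : Euc n₁ × Euc n₂) : ℝ :=
  fderiv ℝ (fun y => fderiv ℝ φ y ((0 : Euc n₁), EuclideanSpace.single j 1)) x
    (EuclideanSpace.single i 1, (0 : Euc n₂))

/-- The quantity `q(x,z)` from the paper. -/
def qfun {n₁ n₂ : ℕ} (θ₁ θ₂ : ℝ) (u : Euc n₁ × Euc n₂ → ℝ)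
    (z x : Euc n₁ × Euc n₂) : ℝ :=
  (|u (x.1 + z.1, x.2 + z.2) - u (x.1, x.2 + z.2)| ^ θ₁
      + |u (x.1 + z.1, x.2) - u x| ^ θ₁) *
  (|u (x.1 + z.1, x.2 + z.2) - u (x.1 + z.1, x.2)| ^ θ₂
      + |u (x.1, x.2 + z.2) - u x| ^ θ₂)

/-!
On the support of `ρ_ε` every increment has `|z| < ε`, so for `x ∈ Ω^ε` the points `x + z₁` and
`x + z₂` stay in `Ω`, and the Lipschitz bound controls the integrand of `E_{ε,p}(u)` by
`λ^θ |z₁|^{θ₁} |z₂|^{θ₂} |z|^{-p}`. Integrating over `Ω^ε ⊆ Ω` and substituting `z = ε w`, this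
weight being homogeneous of degree `θ - p`, gives
`E_{ε,p}(u) ≤ ε^{θ-p} λ^θ |Ω| ∫ |w₁|^{θ₁} |w₂|^{θ₂} |w|^{-p} ρ(w) dw`.
For `p ≤ θ` the weight is at most `1` on the unit ball, so the last integral is at most
`∫ ρ = 1`. For `p = θ` the bound does not depend on `ε`; for `p < θ` it tends to `0` with `ε`.
-/

section ProdNorm

variable {n₁ n₂ : ℕ}

lemma norm_fst_le_prodNorm (z : Euc n₁ × Euc n₂) : ‖z.1‖ ≤ prodNorm z :=
  (Real.le_sqrt (norm_nonneg _) (by positivity)).2 (le_add_of_nonneg_right (sq_nonneg _))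

lemma norm_snd_le_prodNorm (z : Euc n₁ × Euc n₂) : ‖z.2‖ ≤ prodNorm z :=
  (Real.le_sqrt (norm_nonneg _) (by positivity)).2 (le_add_of_nonneg_left (sq_nonneg _))

lemma prodNorm_nonneg (z : Euc n₁ × Euc n₂) : 0 ≤ prodNorm z := Real.sqrt_nonneg _

lemma prodNorm_smul {c : ℝ} (hc : 0 ≤ c) (z : Euc n₁ × Euc n₂) :
    prodNorm (c • z) = c * prodNorm z := by
  simp only [prodNorm, Prod.smul_fst, Prod.smul_snd, norm_smul, Real.norm_of_nonneg hc, mul_pow,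
    ← mul_add, Real.sqrt_mul (sq_nonneg c), Real.sqrt_sq hc]

end ProdNorm

section CrossWeight

variable {n₁ n₂ : ℕ}

def crossWeight (θ₁ θ₂ p : ℝ) (z : Euc n₁ × Euc n₂) : ℝ :=
  ‖z.1‖ ^ θ₁ * ‖z.2‖ ^ θ₂ / prodNorm z ^ p

lemma crossWeight_nonneg (θ₁ θ₂ p : ℝ) (z : Euc n₁ × Euc n₂) : 0 ≤ crossWeight θ₁ θ₂ p z := by
  have := prodNorm_nonneg z
  unfold crossWeight
  positivity

lemma crossWeight_smul {θ₁ θ₂ p ε : ℝ} (hθ₁ : θ₁ ≠ 0) (hε : 0 < ε) (z : Euc n₁ × Euc n₂) :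
    crossWeight θ₁ θ₂ p (ε • z) = ε ^ (θ₁ + θ₂ - p) * crossWeight θ₁ θ₂ p z := by
  rcases (prodNorm_nonneg z).eq_or_lt with h0 | h0
  · have hz₁ : ‖z.1‖ = 0 := le_antisymm (h0 ▸ norm_fst_le_prodNorm z) (norm_nonneg _)
    simp [crossWeight, norm_smul, hz₁, Real.zero_rpow hθ₁]
  · simp only [crossWeight, Prod.smul_fst, Prod.smul_snd, norm_smul, Real.norm_of_nonneg hε.le,
      prodNorm_smul hε.le,
      Real.mul_rpow hε.le (norm_nonneg _), Real.mul_rpow hε.le (prodNorm_nonneg z),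
      Real.rpow_sub hε, Real.rpow_add hε]
    field_simp

lemma crossWeight_le_one {θ₁ θ₂ p : ℝ} (hθ₁ : 0 ≤ θ₁) (hθ₂ : 0 ≤ θ₂) (hp : 0 ≤ p)
    (hpθ : p ≤ θ₁ + θ₂) {z : Euc n₁ × Euc n₂} (hz : prodNorm z ≤ 1) :
    crossWeight θ₁ θ₂ p z ≤ 1 := by
  have hz₀ := prodNorm_nonneg z
  refine div_le_one_of_le₀ ?_ (Real.rpow_nonneg hz₀ p)
  calc ‖z.1‖ ^ θ₁ * ‖z.2‖ ^ θ₂ ≤ prodNorm z ^ θ₁ * prodNorm z ^ θ₂ := by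
        gcongr
        exacts [norm_fst_le_prodNorm z, norm_snd_le_prodNorm z]
    _ = prodNorm z ^ (θ₁ + θ₂) := (Real.rpow_add_of_nonneg hz₀ hθ₁ hθ₂).symm
    _ ≤ prodNorm z ^ p := Real.rpow_le_rpow_of_exponent_ge' hz₀ hz hp hpθ

end CrossWeight

section Tube

variable {m : ℕ} {Ω : Set (Euc m)} {ε : ℝ}

lemma tube_subset (hε : 0 < ε) : tube Ω ε ⊆ Ω := fun x hx => by
  simpa using hx 0 (by simpa using hε)

lemma isClosed_tube (Ω : Set (Euc m)) (ε : ℝ) : IsClosed (tube Ω ε) := by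
  refine isClosed_of_closure_subset fun x hx z hz => ?_
  obtain ⟨y, hy, hxy⟩ := Metric.mem_closure_iff.1 hx (ε - ‖z‖) (by linarith)
  have hshift : ‖x - y + z‖ < ε := (norm_add_le _ _).trans_lt (by rw [← dist_eq_norm]; linarith)
  simpa only [← add_assoc, add_sub_cancel] using hy (x - y + z) hshift

end Tube

lemma lintegral_comp_smul_of_pos {E : Type*} [NormedAddCommGroup E] [NormedSpace ℝ E]
    [MeasurableSpace E] [BorelSpace E] [FiniteDimensional ℝ E] (μ : Measure E)
    [μ.IsAddHaarMeasure] (g : E → ℝ≥0∞) {ε : ℝ} (hε : 0 < ε) :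
    ∫⁻ x, g (ε • x) ∂μ = ENNReal.ofReal (ε ^ Module.finrank ℝ E)⁻¹ * ∫⁻ x, g x ∂μ := by
  calc ∫⁻ x, g (ε • x) ∂μ = ∫⁻ x, g x ∂(μ.map (ε • ·)) :=
        (lintegral_map_equiv g (Homeomorph.smulOfNeZero ε hε.ne').toMeasurableEquiv).symm
    _ = _ := by
      rw [Measure.map_addHaar_smul μ hε.ne', lintegral_smul_measure, smul_eq_mul,
        abs_of_pos (by positivity)]

lemma lintegral_rescaled_kernel_mul {E : Type*} [NormedAddCommGroup E] [NormedSpace ℝ E]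
    [MeasurableSpace E] [BorelSpace E] [FiniteDimensional ℝ E] (μ : Measure E)
    [μ.IsAddHaarMeasure] (ρ : E → ℝ) (G : E → ℝ≥0∞) {ε : ℝ} (hε : 0 < ε) :
    ∫⁻ z, ENNReal.ofReal ((ε ^ Module.finrank ℝ E)⁻¹ * ρ (ε⁻¹ • z)) * G z ∂μ =
      ∫⁻ w, ENNReal.ofReal (ρ w) * G (ε • w) ∂μ := by
  have hd : 0 ≤ (ε ^ Module.finrank ℝ E)⁻¹ := by positivity
  simp only [ENNReal.ofReal_mul hd, mul_assoc]
  rw [lintegral_const_mul' _ _ ENNReal.ofReal_ne_top,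
    ← lintegral_comp_smul_of_pos μ (fun z => ENNReal.ofReal (ρ (ε⁻¹ • z)) * G z) hε]
  simp only [inv_smul_smul₀ hε.ne']

instance isAddHaarMeasure_volume_euc_prod {n₁ n₂ : ℕ} :
    (volume : Measure (Euc n₁ × Euc n₂)).IsAddHaarMeasure := by
  rw [Measure.volume_eq_prod]
  infer_instance

lemma LipschitzOnWith.rpow_increments_le {E₁ E₂ : Type*} [SeminormedAddCommGroup E₁]
    [SeminormedAddCommGroup E₂] {u : E₁ × E₂ → ℝ} {K : ℝ≥0} {s : Set (E₁ × E₂)} (hu : LipschitzOnWith K u s)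
    {θ₁ θ₂ : ℝ} (hθ₁ : 0 ≤ θ₁) (hθ₂ : 0 ≤ θ₂) {x z : E₁ × E₂} (hx : x ∈ s)
    (hx₁ : (x.1 + z.1, x.2) ∈ s) (hx₂ : (x.1, x.2 + z.2) ∈ s) :
    |u (x.1 + z.1, x.2) - u x| ^ θ₁ * |u (x.1, x.2 + z.2) - u x| ^ θ₂ ≤
      (K : ℝ) ^ (θ₁ + θ₂) * (‖z.1‖ ^ θ₁ * ‖z.2‖ ^ θ₂) := by
  have h₁ : |u (x.1 + z.1, x.2) - u x| ≤ K * ‖z.1‖ := by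
    have hd : dist (x.1 + z.1, x.2) x = ‖z.1‖ := by
      rw [Prod.dist_eq, dist_self, dist_eq_norm, add_sub_cancel_left, max_eq_left (norm_nonneg _)]
    simpa [Real.dist_eq, hd] using hu.dist_le_mul _ hx₁ _ hx
  have h₂ : |u (x.1, x.2 + z.2) - u x| ≤ K * ‖z.2‖ := by
    have hd : dist (x.1, x.2 + z.2) x = ‖z.2‖ := by
      rw [Prod.dist_eq, dist_self, dist_eq_norm, add_sub_cancel_left, max_eq_right (norm_nonneg _)]
    simpa [Real.dist_eq, hd] using hu.dist_le_mul _ hx₂ _ hx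
  calc |u (x.1 + z.1, x.2) - u x| ^ θ₁ * |u (x.1, x.2 + z.2) - u x| ^ θ₂
      ≤ (K * ‖z.1‖) ^ θ₁ * (K * ‖z.2‖) ^ θ₂ := by gcongr
    _ = (K : ℝ) ^ (θ₁ + θ₂) * (‖z.1‖ ^ θ₁ * ‖z.2‖ ^ θ₂) := by
      rw [Real.mul_rpow K.coe_nonneg (norm_nonneg _), Real.mul_rpow K.coe_nonneg (norm_nonneg _),
        Real.rpow_add_of_nonneg K.coe_nonneg hθ₁ hθ₂]
      ring

section Kernel

variable {n₁ n₂ : ℕ} {ρ : Euc n₁ × Euc n₂ → ℝ}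

lemma IsKernel.prodNorm_lt_of_ne_zero (hρ : IsKernel ρ) {ε : ℝ} (hε : 0 < ε)
    {z : Euc n₁ × Euc n₂} (hz : ρ (ε⁻¹ • z) ≠ 0) : prodNorm z < ε := by
  by_contra! h
  refine hz (hρ.support _ ?_)
  rwa [prodNorm_smul (inv_nonneg.2 hε.le), inv_mul_eq_div, one_le_div hε]

lemma IsKernel.lintegral_crossWeight_mul_le_one (hρ : IsKernel ρ) {θ₁ θ₂ p : ℝ}
    (hθ₁ : 0 ≤ θ₁) (hθ₂ : 0 ≤ θ₂) (hp : 0 ≤ p) (hpθ : p ≤ θ₁ + θ₂) :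
    ∫⁻ z, ENNReal.ofReal (crossWeight θ₁ θ₂ p z * ρ z) ≤ 1 := by
  have hweight : ∀ z, crossWeight θ₁ θ₂ p z * ρ z ≤ ρ z := fun z => by
    by_cases hz : ρ z = 0
    · simp [hz]
    · have hz₁ : prodNorm z ≤ 1 := (not_le.1 (mt (hρ.support z) hz)).le
      exact mul_le_of_le_one_left (hρ.nonneg z) (crossWeight_le_one hθ₁ hθ₂ hp hpθ hz₁)
  calc ∫⁻ z, ENNReal.ofReal (crossWeight θ₁ θ₂ p z * ρ z)
      ≤ ∫⁻ z, ENNReal.ofReal (ρ z) := lintegral_mono fun z => ENNReal.ofReal_le_ofReal (hweight z)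
    _ = ENNReal.ofReal (∫ z, ρ z) :=
      (ofReal_integral_eq_lintegral_ofReal hρ.integrable (ae_of_all _ hρ.nonneg)).symm
    _ = 1 := by rw [hρ.total, ENNReal.ofReal_one]

end Kernel

section Energy

variable {n₁ n₂ : ℕ} {Ω₁ : Set (Euc n₁)} {Ω₂ : Set (Euc n₂)} {u : Euc n₁ × Euc n₂ → ℝ}
  {K : ℝ≥0} {θ₁ θ₂ p ε : ℝ}

lemma setLIntegral_tube_increments_le (hu : LipschitzOnWith K u (Ω₁ ×ˢ Ω₂)) (hθ₁ : 0 ≤ θ₁)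
    (hθ₂ : 0 ≤ θ₂) (hε : 0 < ε) {z : Euc n₁ × Euc n₂} (hz : prodNorm z < ε) :
    ∫⁻ x in tube Ω₁ ε ×ˢ tube Ω₂ ε,
        ENNReal.ofReal
          (|u (x.1 + z.1, x.2) - u x| ^ θ₁ * |u (x.1, x.2 + z.2) - u x| ^ θ₂ / prodNorm z ^ p) ≤
      ENNReal.ofReal ((K : ℝ) ^ (θ₁ + θ₂)) * volume (Ω₁ ×ˢ Ω₂) *
        ENNReal.ofReal (crossWeight θ₁ θ₂ p z) := by
  have hmeas := (isClosed_tube Ω₁ ε).measurableSet.prod (isClosed_tube Ω₂ ε).measurableSet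
  have hz₁ := (norm_fst_le_prodNorm z).trans_lt hz
  have hz₂ := (norm_snd_le_prodNorm z).trans_lt hz
  calc _ ≤ ∫⁻ _ in tube Ω₁ ε ×ˢ tube Ω₂ ε,
          ENNReal.ofReal ((K : ℝ) ^ (θ₁ + θ₂) * crossWeight θ₁ θ₂ p z) := by
        refine setLIntegral_mono' hmeas fun x hx => ENNReal.ofReal_le_ofReal ?_
        rw [crossWeight, ← mul_div_assoc]
        refine div_le_div_of_nonneg_right ?_ (Real.rpow_nonneg (prodNorm_nonneg z) p)
        exact hu.rpow_increments_le hθ₁ hθ₂ ⟨tube_subset hε hx.1, tube_subset hε hx.2⟩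
          ⟨hx.1 z.1 hz₁, tube_subset hε hx.2⟩ ⟨tube_subset hε hx.1, hx.2 z.2 hz₂⟩
    _ ≤ ENNReal.ofReal ((K : ℝ) ^ (θ₁ + θ₂) * crossWeight θ₁ θ₂ p z) * volume (Ω₁ ×ˢ Ω₂) := by
        rw [setLIntegral_const]
        gcongr
        exacts [tube_subset hε, tube_subset hε]
    _ = _ := by rw [ENNReal.ofReal_mul (by positivity), mul_right_comm]

theorem Eeps_le_rpow_mul {ρ : Euc n₁ × Euc n₂ → ℝ} (hρ : IsKernel ρ)
    (hu : LipschitzOnWith K u (Ω₁ ×ˢ Ω₂)) (hθ₁ : 0 < θ₁) (hθ₂ : 0 < θ₂)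
    (hV : volume (Ω₁ ×ˢ Ω₂) ≠ ⊤) (hε : 0 < ε) :
    Eeps ρ Ω₁ Ω₂ θ₁ θ₂ p ε u ≤
      ENNReal.ofReal (ε ^ (θ₁ + θ₂ - p)) *
        (ENNReal.ofReal ((K : ℝ) ^ (θ₁ + θ₂)) * volume (Ω₁ ×ˢ Ω₂) *
          ∫⁻ z, ENNReal.ofReal (crossWeight θ₁ θ₂ p z * ρ z)) := by
  set C := ENNReal.ofReal ((K : ℝ) ^ (θ₁ + θ₂)) * volume (Ω₁ ×ˢ Ω₂)
  have hfinrank : Module.finrank ℝ (Euc n₁ × Euc n₂) = n₁ + n₂ := by simp [Module.finrank_prod]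
  have hpointwise : ∀ z : Euc n₁ × Euc n₂,
      ENNReal.ofReal ((ε ^ (n₁ + n₂))⁻¹ * ρ (ε⁻¹ • z)) *
          ∫⁻ x in tube Ω₁ ε ×ˢ tube Ω₂ ε,
            ENNReal.ofReal (|u (x.1 + z.1, x.2) - u x| ^ θ₁ * |u (x.1, x.2 + z.2) - u x| ^ θ₂ /
              prodNorm z ^ p) ≤
        ENNReal.ofReal ((ε ^ (n₁ + n₂))⁻¹ * ρ (ε⁻¹ • z)) *
          (C * ENNReal.ofReal (crossWeight θ₁ θ₂ p z)) := fun z => by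
    by_cases hz : ρ (ε⁻¹ • z) = 0
    · simp [hz]
    · gcongr
      exact setLIntegral_tube_increments_le hu hθ₁.le hθ₂.le hε (hρ.prodNorm_lt_of_ne_zero hε hz)
  calc Eeps ρ Ω₁ Ω₂ θ₁ θ₂ p ε u
      ≤ ∫⁻ z, ENNReal.ofReal ((ε ^ (n₁ + n₂))⁻¹ * ρ (ε⁻¹ • z)) *
          (C * ENNReal.ofReal (crossWeight θ₁ θ₂ p z)) := lintegral_mono hpointwise
    _ = ∫⁻ w, ENNReal.ofReal (ρ w) * (C * ENNReal.ofReal (crossWeight θ₁ θ₂ p (ε • w))) := by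
      rw [← hfinrank]
      exact lintegral_rescaled_kernel_mul volume ρ _ hε
    _ = ∫⁻ w, ENNReal.ofReal (ε ^ (θ₁ + θ₂ - p)) * C *
          ENNReal.ofReal (crossWeight θ₁ θ₂ p w * ρ w) := by
      congr with w
      rw [crossWeight_smul hθ₁.ne' hε, ENNReal.ofReal_mul (by positivity),
        ENNReal.ofReal_mul (crossWeight_nonneg θ₁ θ₂ p w)]
      ring
    _ = _ := by
      rw [lintegral_const_mul' _ _ (ENNReal.mul_ne_top ENNReal.ofReal_ne_top
        (ENNReal.mul_ne_top ENNReal.ofReal_ne_top hV)), mul_assoc]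

end Energy

lemma liminf_nhdsGT_zero_eq_zero_of_le_rpow_mul {f : ℝ → ℝ≥0∞} {a : ℝ} (ha : 0 < a)
    {C : ℝ≥0∞} (hC : C ≠ ⊤) (hf : ∀ ε > 0, f ε ≤ ENNReal.ofReal (ε ^ a) * C) :
    liminf f (𝓝[>] 0) = 0 := by
  have hrpow : Tendsto (fun ε : ℝ => ε ^ a) (𝓝[>] 0) (𝓝 0) := by
    simpa [Real.zero_rpow ha.ne'] using
      (Real.continuousAt_rpow_const 0 a (Or.inr ha.le)).tendsto.mono_left nhdsWithin_le_nhds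
  have hbound : Tendsto (fun ε : ℝ => ENNReal.ofReal (ε ^ a) * C) (𝓝[>] 0) (𝓝 0) := by
    simpa using ENNReal.Tendsto.mul_const (ENNReal.tendsto_ofReal hrpow) (Or.inr hC)
  refine le_antisymm ?_ zero_le
  calc liminf f (𝓝[>] 0) ≤ liminf (fun ε : ℝ => ENNReal.ofReal (ε ^ a) * C) (𝓝[>] 0) :=
        liminf_le_liminf (eventually_nhdsWithin_of_forall hf)
    _ = 0 := hbound.liminf_eq

theorem statement1_general {n₁ n₂ : ℕ}
    (Ω₁ : Set (Euc n₁)) (Ω₂ : Set (Euc n₂)) (hΩ₁ : GoodDomain Ω₁) (hΩ₂ : GoodDomain Ω₂)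
    (ρ : Euc n₁ × Euc n₂ → ℝ) (hρ : IsKernel ρ)
    (θ₁ θ₂ : ℝ) (hθ₁ : 0 < θ₁) (hθ₂ : 0 < θ₂)
    (u : Euc n₁ × Euc n₂ → ℝ) (lam : ℝ) (hlam : 0 ≤ lam)
    (hu : LipschitzOnWith (Real.toNNReal lam) u (Ω₁ ×ˢ Ω₂)) :
    Energy ρ Ω₁ Ω₂ θ₁ θ₂ (θ₁ + θ₂) u ≤
      ENNReal.ofReal (lam ^ (θ₁ + θ₂)) * volume (Ω₁ ×ˢ Ω₂) *
        (∫⁻ z : Euc n₁ × Euc n₂,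
          ENNReal.ofReal (‖z.1‖ ^ θ₁ * ‖z.2‖ ^ θ₂ / prodNorm z ^ (θ₁ + θ₂) * ρ z)) ∧
    (∫⁻ z : Euc n₁ × Euc n₂,
        ENNReal.ofReal (‖z.1‖ ^ θ₁ * ‖z.2‖ ^ θ₂ / prodNorm z ^ (θ₁ + θ₂) * ρ z)) < ⊤ ∧
    Energy ρ Ω₁ Ω₂ θ₁ θ₂ (θ₁ + θ₂) u < ⊤ ∧
    (∀ p : ℝ, 0 < p → p < θ₁ + θ₂ → Energy ρ Ω₁ Ω₂ θ₁ θ₂ p u = 0) := by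
  have hV : volume (Ω₁ ×ˢ Ω₂) ≠ ⊤ := (hΩ₁.bounded.prod hΩ₂.bounded).measure_lt_top.ne
  have hθ : 0 < θ₁ + θ₂ := add_pos hθ₁ hθ₂
  have hweight : ∀ p, 0 ≤ p → p ≤ θ₁ + θ₂ →
      ∫⁻ z, ENNReal.ofReal (crossWeight θ₁ θ₂ p z * ρ z) < ⊤ := fun p hp hpθ =>
    (hρ.lintegral_crossWeight_mul_le_one hθ₁.le hθ₂.le hp hpθ).trans_lt ENNReal.one_lt_top
  have hEeps : ∀ p, ∀ ε > 0, Eeps ρ Ω₁ Ω₂ θ₁ θ₂ p ε u ≤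
      ENNReal.ofReal (ε ^ (θ₁ + θ₂ - p)) * (ENNReal.ofReal (lam ^ (θ₁ + θ₂)) *
        volume (Ω₁ ×ˢ Ω₂) * ∫⁻ z, ENNReal.ofReal (crossWeight θ₁ θ₂ p z * ρ z)) := fun p ε hε => by
    simpa only [Real.coe_toNNReal lam hlam] using Eeps_le_rpow_mul hρ hu hθ₁ hθ₂ hV hε
  have hcritical : Energy ρ Ω₁ Ω₂ θ₁ θ₂ (θ₁ + θ₂) u ≤ ENNReal.ofReal (lam ^ (θ₁ + θ₂)) *
      volume (Ω₁ ×ˢ Ω₂) * ∫⁻ z, ENNReal.ofReal (crossWeight θ₁ θ₂ (θ₁ + θ₂) z * ρ z) := by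
    refine (liminf_le_liminf (eventually_nhdsWithin_of_forall fun ε hε => ?_)).trans_eq
      (liminf_const _)
    simpa using hEeps (θ₁ + θ₂) ε hε
  refine ⟨hcritical, hweight _ hθ.le le_rfl,
    hcritical.trans_lt (ENNReal.mul_lt_top (ENNReal.mul_lt_top ENNReal.ofReal_lt_top hV.lt_top)
      (hweight _ hθ.le le_rfl)), fun p hp hpθ => ?_⟩
  exact liminf_nhdsGT_zero_eq_zero_of_le_rpow_mul (sub_pos.2 hpθ)
    (ENNReal.mul_ne_top (ENNReal.mul_ne_top ENNReal.ofReal_ne_top hV) (hweight p hp.le hpθ.le).ne)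
    (hEeps p)

/-- for a Lipschitz function `u` with constant `λ`,
`E_θ(u) ≤ λ^θ |Ω| ∫ |z₁|^{θ₁}|z₂|^{θ₂}|z|^{-θ} ρ(z) dz < ∞`, and `E_p(u) = 0` for `p < θ`. -/
theorem statement1 {n₁ n₂ : ℕ} (hn₁ : 1 ≤ n₁) (hn₂ : 1 ≤ n₂)
    (Ω₁ : Set (Euc n₁)) (Ω₂ : Set (Euc n₂)) (hΩ₁ : GoodDomain Ω₁) (hΩ₂ : GoodDomain Ω₂)
    (ρ : Euc n₁ × Euc n₂ → ℝ) (hρ : IsKernel ρ)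
    (θ₁ θ₂ : ℝ) (hθ₁ : 0 < θ₁) (hθ₂ : 0 < θ₂)
    (u : Euc n₁ × Euc n₂ → ℝ) (lam : ℝ) (hlam : 0 ≤ lam)
    (hu : LipschitzOnWith (Real.toNNReal lam) u (Ω₁ ×ˢ Ω₂)) :
    Energy ρ Ω₁ Ω₂ θ₁ θ₂ (θ₁ + θ₂) u ≤
      ENNReal.ofReal (lam ^ (θ₁ + θ₂)) * volume (Ω₁ ×ˢ Ω₂) *
        (∫⁻ z : Euc n₁ × Euc n₂,
          ENNReal.ofReal (‖z.1‖ ^ θ₁ * ‖z.2‖ ^ θ₂ / prodNorm z ^ (θ₁ + θ₂) * ρ z)) ∧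
    (∫⁻ z : Euc n₁ × Euc n₂,
        ENNReal.ofReal (‖z.1‖ ^ θ₁ * ‖z.2‖ ^ θ₂ / prodNorm z ^ (θ₁ + θ₂) * ρ z)) < ⊤ ∧
    Energy ρ Ω₁ Ω₂ θ₁ θ₂ (θ₁ + θ₂) u < ⊤ ∧
    (∀ p : ℝ, 0 < p → p < θ₁ + θ₂ → Energy ρ Ω₁ Ω₂ θ₁ θ₂ p u = 0) :=
  statement1_general Ω₁ Ω₂ hΩ₁ hΩ₂ ρ hρ θ₁ θ₂ hθ₁ hθ₂ u lam hlam hu
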